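/- arXiv:2110.07819 — 3 statements merged into one kernel-verified Lean document; each statement's English description precedes it below -/
import Mathlib

section
/- Let p > 5 be prime and let N ≥ 1 with φ(N) dividing 4p. Then N ∈ {1, 2, 3, 4, 5, 6, 8, 10, 12} ∪ {2p+1, 2(2p+1)} (the latter only when 2p+1 is prime), or N ∈ {4p+1, 2(4p+1)} (the latter only when 4p+1 is prime), or N ∈ {3(2p+1), 4(2p+1), 6(2p+1)} with 2p+1 prime. -/
/-!
If `p ∤ φ N` then `φ N ∣ 4`, which forces `N ∣ 120`, leaving a finite check. Otherwise Euler's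
product formula gives a prime `q ∣ N` with `p ∣ q - 1` (`p ∣ N` is impossible, as `p - 1 ∤ 4`),
and `q - 1 ∣ 4p` leaves `q = 2p + 1` or `q = 4p + 1`. Such a `q` divides `N` exactly once, since
`q ∤ 4p`, so `N = k q` with `φ k ∣ 4p / (q - 1)`, which is `2` or `1`.
-/

open Nat

namespace Nat

theorem totient_prime_pow_dvd_totient {q k n : ℕ} (hq : q.Prime) (hk : 0 < k) (h : q ^ k ∣ n) :
    q ^ (k - 1) * (q - 1) ∣ φ n :=
  totient_prime_pow hq hk ▸ totient_dvd_of_dvd h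

theorem sub_one_dvd_totient {q n : ℕ} (hq : q.Prime) (h : q ∣ n) : q - 1 ∣ φ n :=
  totient_prime hq ▸ totient_dvd_of_dvd h

theorem sub_one_dvd_of_totient_dvd_mul {p n m : ℕ} (hp : p.Prime) (hpn : p ∣ n)
    (h : φ n ∣ m * p) : p - 1 ∣ m := by
  have := hp.two_le
  have hcop : Coprime p (p - 1) :=
    hp.coprime_iff_not_dvd.mpr (not_dvd_of_pos_of_lt (by omega) (by omega))
  exact hcop.symm.dvd_of_dvd_mul_right ((sub_one_dvd_totient hp hpn).trans h)

theorem exists_prime_dvd_sub_one_of_dvd_totient {p n : ℕ} (hp : p.Prime) (h : p ∣ φ n) :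
    p ∣ n ∨ ∃ q, q.Prime ∧ q ∣ n ∧ p ∣ q - 1 := by
  have : p ∣ n * ∏ q ∈ n.primeFactors, (q - 1) :=
    totient_mul_prod_primeFactors n ▸ h.mul_right _
  rcases hp.prime.dvd_mul.mp this with hpn | hprod
  · exact .inl hpn
  · obtain ⟨q, hq, hpq⟩ := (hp.prime.dvd_finsetProd_iff _).mp hprod
    exact .inr ⟨q, prime_of_mem_primeFactors hq, dvd_of_mem_primeFactors hq, hpq⟩

theorem exists_eq_mul_and_totient_dvd {q n m : ℕ} (hq : q.Prime) (hqn : q ∣ n) (hqm : ¬ q ∣ m)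
    (h : φ n ∣ (q - 1) * m) : ∃ k, n = k * q ∧ φ k ∣ m := by
  have hq1 : 0 < q - 1 := tsub_pos_of_lt hq.one_lt
  obtain ⟨k, rfl⟩ := hqn
  have hqk : ¬ q ∣ k := by
    rintro ⟨j, rfl⟩
    have := (totient_prime_pow_dvd_totient hq two_pos ⟨j, by ring⟩).trans h
    rw [show 2 - 1 = 1 from rfl, pow_one, mul_comm] at this
    exact hqm (Nat.dvd_of_mul_dvd_mul_left hq1 this)
  refine ⟨k, mul_comm _ _, ?_⟩
  rw [totient_mul (hq.coprime_iff_not_dvd.mpr hqk), totient_prime hq] at h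
  exact Nat.dvd_of_mul_dvd_mul_left hq1 h

theorem dvd_of_totient_dvd_four {n : ℕ} (h : φ n ∣ 4) : n ∣ 120 := by
  rw [dvd_iff_prime_pow_dvd_dvd]
  intro q k hq hqk
  rcases k.eq_zero_or_pos with rfl | hk
  · simp
  have h' := (totient_prime_pow_dvd_totient hq hk hqk).trans h
  have hq5 : q ≤ 5 := by have := le_of_dvd four_pos (dvd_of_mul_left_dvd h'); omega
  have hk4 : k ≤ 4 := by
    have := le_of_dvd four_pos (dvd_of_mul_right_dvd h')
    have := (Nat.lt_pow_self hq.one_lt : k - 1 < _).trans_le this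
    omega
  interval_cases q <;> interval_cases k <;> revert hq h' <;> norm_num

theorem mem_of_totient_dvd_four {n : ℕ} (h : φ n ∣ 4) :
    n ∈ ({1, 2, 3, 4, 5, 6, 8, 10, 12} : Finset ℕ) := by
  have key : ∀ d ∈ divisors 120, φ d ∣ 4 → d ∈ ({1, 2, 3, 4, 5, 6, 8, 10, 12} : Finset ℕ) := by
    decide
  exact key n (mem_divisors.mpr ⟨dvd_of_totient_dvd_four h, by norm_num⟩) h

theorem mem_of_totient_dvd_two {n : ℕ} (h : φ n ∣ 2) : n ∈ ({1, 2, 3, 4, 6} : Finset ℕ) := by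
  have key : ∀ d ∈ ({1, 2, 3, 4, 5, 6, 8, 10, 12} : Finset ℕ), φ d ∣ 2 →
      d ∈ ({1, 2, 3, 4, 6} : Finset ℕ) := by
    decide
  exact key n (mem_of_totient_dvd_four (h.trans (by norm_num))) h

theorem eq_two_mul_add_one_or_four_mul_add_one {p q : ℕ} (hp : p.Prime) (hp2 : p ≠ 2)
    (hq : q.Prime) (hpq : p ∣ q - 1) (hq4 : q - 1 ∣ 4 * p) : q = 2 * p + 1 ∨ q = 4 * p + 1 := by
  obtain ⟨t, ht⟩ := hpq
  have ht4 : t ∣ 4 := Nat.dvd_of_mul_dvd_mul_left hp.pos (by rwa [ht, mul_comm 4] at hq4)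
  have hq2 := hq.two_le
  have : t = 1 ∨ t = 2 ∨ t = 4 := by
    have := le_of_dvd four_pos ht4
    interval_cases t <;> simp_all
  rcases this with rfl | rfl | rfl
  · have hq_even : Even q := by
      rw [show q = p + 1 by omega]
      exact (hp.odd_of_ne_two hp2).add_one
    have := hp.two_le
    have := hq.even_iff.mp hq_even
    omega
  · omega
  · omega

end Nat

theorem stmt_2_general (p N : ℕ) (hp : p.Prime) (hp5 : 5 < p)
    (hdvd : N.totient ∣ 4 * p) :
    N ∈ ({1, 2, 3, 4, 5, 6, 8, 10, 12} : Set ℕ) ∨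
      ((2 * p + 1).Prime ∧
        N ∈ ({2 * p + 1, 2 * (2 * p + 1), 3 * (2 * p + 1), 4 * (2 * p + 1),
          6 * (2 * p + 1)} : Set ℕ)) ∨
      ((4 * p + 1).Prime ∧ N ∈ ({4 * p + 1, 2 * (4 * p + 1)} : Set ℕ)) := by
  by_cases hpφ : p ∣ φ N
  swap
  · left
    simpa using mem_of_totient_dvd_four
      ((hp.coprime_iff_not_dvd.mpr hpφ).symm.dvd_of_dvd_mul_right hdvd)
  right
  rcases exists_prime_dvd_sub_one_of_dvd_totient hp hpφ with hpN | ⟨q, hq, hqN, hpq⟩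
  · have := le_of_dvd four_pos (sub_one_dvd_of_totient_dvd_mul hp hpN hdvd)
    omega
  rcases eq_two_mul_add_one_or_four_mul_add_one hp (by omega) hq hpq
    ((sub_one_dvd_totient hq hqN).trans hdvd) with rfl | rfl
  · obtain ⟨k, rfl, hk⟩ := exists_eq_mul_and_totient_dvd (m := 2) hq hqN
      (fun h ↦ by have := le_of_dvd two_pos h; omega)
      (by rwa [show (2 * p + 1 - 1) * 2 = 4 * p by omega])
    have := mem_of_totient_dvd_two hk
    simp only [Finset.mem_insert, Finset.mem_singleton] at this
    refine .inl ⟨hq, ?_⟩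
    rcases this with rfl | rfl | rfl | rfl | rfl <;> simp
  · obtain ⟨k, rfl, hk⟩ := exists_eq_mul_and_totient_dvd (m := 1) hq hqN
      (fun h ↦ by have := le_of_dvd one_pos h; omega)
      (by rwa [show (4 * p + 1 - 1) * 1 = 4 * p by omega])
    rw [Nat.dvd_one, totient_eq_one_iff] at hk
    refine .inr ⟨hq, ?_⟩
    rcases hk with rfl | rfl <;> simp

theorem stmt_2 (p N : ℕ) (hp : p.Prime) (hp5 : 5 < p) (hN : 1 ≤ N)
    (hdvd : N.totient ∣ 4 * p) :
    N ∈ ({1, 2, 3, 4, 5, 6, 8, 10, 12} : Set ℕ) ∨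
      ((2 * p + 1).Prime ∧
        N ∈ ({2 * p + 1, 2 * (2 * p + 1), 3 * (2 * p + 1), 4 * (2 * p + 1),
          6 * (2 * p + 1)} : Set ℕ)) ∨
      ((4 * p + 1).Prime ∧ N ∈ ({4 * p + 1, 2 * (4 * p + 1)} : Set ℕ)) :=
  stmt_2_general p N hp hp5 hdvd
end

section
/- Let p > 5 be prime and N ≥ 1 with φ(N) dividing 6p. Then N can be written as 2^a · q^b with q an odd prime and a ≤ 2. -/
/-!
Since `p` is odd, `4 ∤ 6p`, so `4 ∤ φ(N)`. But `φ` is monotone for divisibility, `φ(8) = 4`,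
and `4 ∣ (d - 1)(q - 1) = φ(dq)` for distinct odd primes `d, q`. Hence `8 ∤ N` and the odd part
of `N` has at most one prime factor.
-/

open scoped Nat

namespace Nat

lemma four_dvd_totient_of_eight_dvd {n : ℕ} (h : 8 ∣ n) : 4 ∣ φ n :=
  calc 4 = φ (2 ^ 3) := by rw [totient_prime_pow prime_two (by norm_num)]; rfl
    _ ∣ φ n := totient_dvd_of_dvd h

lemma factorization_two_le_two_of_not_four_dvd_totient {n : ℕ} (h : ¬ 4 ∣ φ n) :
    n.factorization 2 ≤ 2 := by
  by_contra! h3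
  exact h (four_dvd_totient_of_eight_dvd ((pow_dvd_pow 2 h3).trans (ordProj_dvd n 2)))

lemma four_dvd_totient_of_odd_primes_dvd {n d q : ℕ} (hd : d.Prime) (hq : q.Prime)
    (hd2 : d ≠ 2) (hq2 : q ≠ 2) (hne : d ≠ q) (hdn : d ∣ n) (hqn : q ∣ n) : 4 ∣ φ n := by
  have hcop : Coprime d q := (coprime_primes hd hq).mpr hne
  calc 4 = 2 * 2 := rfl
    _ ∣ (d - 1) * (q - 1) :=
      mul_dvd_mul (hd.even_sub_one hd2).two_dvd (hq.even_sub_one hq2).two_dvd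
    _ = φ (d * q) := by rw [totient_mul hcop, totient_prime hd, totient_prime hq]
    _ ∣ φ n := totient_dvd_of_dvd (hcop.mul_dvd_of_dvd_of_dvd hdn hqn)

lemma exists_odd_prime_pow_eq_of_not_four_dvd_totient {m : ℕ} (hm0 : m ≠ 0) (hm2 : ¬ 2 ∣ m)
    (h : ¬ 4 ∣ φ m) : ∃ q b, q.Prime ∧ Odd q ∧ m = q ^ b := by
  rcases eq_or_ne m 1 with rfl | hm1
  · exact ⟨3, 0, prime_three, by decide, rfl⟩
  have hq := minFac_prime hm1
  have hq2 : m.minFac ≠ 2 := fun h2 => hm2 (h2 ▸ minFac_dvd m)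
  refine ⟨m.minFac, _, hq, hq.odd_of_ne_two hq2,
    eq_prime_pow_of_unique_prime_dvd hm0 fun hd hdm => ?_⟩
  by_contra hne
  exact h (four_dvd_totient_of_odd_primes_dvd hd hq (by rintro rfl; exact hm2 hdm) hq2 hne hdm
    (minFac_dvd m))

theorem exists_eq_two_pow_mul_odd_prime_pow_of_not_four_dvd_totient {n : ℕ} (hn : n ≠ 0)
    (h : ¬ 4 ∣ φ n) : ∃ a b q, q.Prime ∧ Odd q ∧ a ≤ 2 ∧ n = 2 ^ a * q ^ b := by
  obtain ⟨q, b, hq, hq2, hm⟩ := exists_odd_prime_pow_eq_of_not_four_dvd_totient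
    (ordCompl_pos 2 hn).ne' (not_dvd_ordCompl prime_two hn)
    fun h4 => h (h4.trans (totient_dvd_of_dvd (ordCompl_dvd n 2)))
  exact ⟨_, b, q, hq, hq2, factorization_two_le_two_of_not_four_dvd_totient h,
    by rw [← hm, ordProj_mul_ordCompl_eq_self]⟩

end Nat

theorem stmt_6_general (p N : ℕ) (hp : p.Prime) (hp5 : 5 < p)
    (hdvd : N.totient ∣ 6 * p) :
    ∃ (a b q : ℕ), q.Prime ∧ Odd q ∧ a ≤ 2 ∧ N = 2 ^ a * q ^ b := by
  have hN : N ≠ 0 := by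
    rintro rfl
    rw [Nat.totient_zero, zero_dvd_iff] at hdvd
    omega
  obtain ⟨k, rfl⟩ := hp.odd_of_ne_two (by omega)
  refine Nat.exists_eq_two_pow_mul_odd_prime_pow_of_not_four_dvd_totient hN fun h4 => ?_
  have := h4.trans hdvd
  omega

theorem stmt_6 (p N : ℕ) (hp : p.Prime) (hp5 : 5 < p) (hN : 1 ≤ N)
    (hdvd : N.totient ∣ 6 * p) :
    ∃ (a b q : ℕ), q.Prime ∧ Odd q ∧ a ≤ 2 ∧ N = 2 ^ a * q ^ b :=
  stmt_6_general p N hp hp5 hdvd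
end

section
/- For each even positive integer a, the set of primes p ≤ X such that ap + 1 is also prime has counting function O(X / (log X)^2); consequently, the set of primes p such that none of 2p+1, 4p+1, 6p+1 is prime is infinite. -/
/-!
If only finitely many primes `p` had all of `a p + 1` (`a ∈ A`) composite, then every prime
`p ≤ X` outside a fixed finite set would lie in one of the sets `{p : a p + 1 prime}`, so
`π(X) ≤ K + C X / log² X`. This contradicts the lower bound `π(X) ≥ c X / log X`, because
`X / log X` eventually dominates `K + C X / log² X`.
-/

open Filter Finset Real Topology

theorem Finset.card_filter_le_card_filter_forall_not_add_sum {ι α : Type*} (s : Finset α)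
    (P : α → Prop) [DecidablePred P] (A : Finset ι) (Q : ι → α → Prop)
    [∀ i, DecidablePred (Q i)] :
    #(s.filter P) ≤
      #(s.filter fun x => P x ∧ ∀ i ∈ A, ¬ Q i x) + ∑ i ∈ A, #(s.filter fun x => P x ∧ Q i x) := by
  classical
  have hcover : s.filter P ⊆ (s.filter fun x => P x ∧ ∀ i ∈ A, ¬ Q i x) ∪
      A.biUnion fun i => s.filter fun x => P x ∧ Q i x := by
    intro x hx
    simp only [mem_filter, mem_union, mem_biUnion] at hx ⊢
    by_cases h : ∀ i ∈ A, ¬ Q i x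
    · exact Or.inl ⟨hx.1, hx.2, h⟩
    · push Not at h
      obtain ⟨i, hi, hQ⟩ := h
      exact Or.inr ⟨i, hi, hx.1, hx.2, hQ⟩
  calc #(s.filter P) ≤ _ := card_le_card hcover
    _ ≤ _ := card_union_le _ _
    _ ≤ _ := Nat.add_le_add_left card_biUnion_le _

theorem Real.eventually_const_add_mul_div_log_sq_lt (K C : ℝ) {c : ℝ} (hc : 0 < c) :
    ∀ᶠ x : ℝ in atTop, K + C * x / log x ^ 2 < c * x / log x := by
  have hratio : Tendsto (fun x => K * (log x / x) + C / log x) atTop (𝓝 0) := by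
    have h₁ := isLittleO_log_id_atTop.tendsto_div_nhds_zero.const_mul K
    have h₂ := tendsto_log_atTop.inv_tendsto_atTop.const_mul C
    simpa [div_eq_mul_inv] using h₁.add h₂
  filter_upwards [hratio.eventually (gt_mem_nhds hc), eventually_gt_atTop 1] with x hx hx1
  have hlog : 0 < log x := log_pos hx1
  have hx0 : 0 < x := by linarith
  calc K + C * x / log x ^ 2 = (K * (log x / x) + C / log x) * (x / log x) := by
        field_simp
    _ < c * (x / log x) := mul_lt_mul_of_pos_right hx (div_pos hx0 hlog)
    _ = c * x / log x := (mul_div_assoc _ _ _).symm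

theorem Nat.infinite_setOf_prime_forall_not_prime_mul_add_one (A : Finset ℕ)
    (hbound : ∀ a ∈ A, ∃ C : ℝ, ∀ X : ℕ, 2 ≤ X →
      (#((range (X + 1)).filter fun p => p.Prime ∧ (a * p + 1).Prime) : ℝ) ≤
        C * X / Real.log X ^ 2)
    (hPNT : ∃ c : ℝ, 0 < c ∧ ∃ X0 : ℕ, ∀ X : ℕ, X0 ≤ X →
      c * X / Real.log X ≤ (#((range (X + 1)).filter Nat.Prime) : ℝ)) :
    {p : ℕ | p.Prime ∧ ∀ a ∈ A, ¬ (a * p + 1).Prime}.Infinite := by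
  intro hfin
  choose! C hC using hbound
  obtain ⟨c, hc, X0, hlower⟩ := hPNT
  set K : ℝ := ((#hfin.toFinset : ℕ) : ℝ)
  have hupper : ∀ X : ℕ, 2 ≤ X →
      (#((range (X + 1)).filter Nat.Prime) : ℝ) ≤ K + (∑ a ∈ A, C a) * X / Real.log X ^ 2 := by
    intro X hX
    have hexc : (range (X + 1)).filter (fun p => p.Prime ∧ ∀ a ∈ A, ¬ (a * p + 1).Prime) ⊆
        hfin.toFinset := fun p hp => by simpa using (mem_filter.1 hp).2
    have hcount := card_filter_le_card_filter_forall_not_add_sum (range (X + 1)) Nat.Prime A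
      fun a p => (a * p + 1).Prime
    calc (#((range (X + 1)).filter Nat.Prime) : ℝ)
        ≤ K + ∑ a ∈ A, (#((range (X + 1)).filter fun p => p.Prime ∧ (a * p + 1).Prime) : ℝ) := by
          simp only [K]
          exact_mod_cast hcount.trans (Nat.add_le_add_right (card_le_card hexc) _)
      _ ≤ K + ∑ a ∈ A, C a * X / Real.log X ^ 2 := by
          gcongr with a ha
          exact hC a ha X hX
      _ = K + (∑ a ∈ A, C a) * X / Real.log X ^ 2 := by rw [← sum_div, ← sum_mul]
  obtain ⟨X, hdom, hX0, hX2⟩ := ((tendsto_natCast_atTop_atTop.eventually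
      (eventually_const_add_mul_div_log_sq_lt K (∑ a ∈ A, C a) hc)).and
    ((eventually_ge_atTop X0).and (eventually_ge_atTop 2))).exists
  exact (hlower X hX0).trans (hupper X hX2) |>.not_gt hdom

theorem stmt_13
    (hbound : ∀ a ∈ ({2, 4, 6} : Finset ℕ), ∃ C : ℝ, ∀ X : ℕ, 2 ≤ X →
      (((Finset.range (X + 1)).filter
          (fun p => Nat.Prime p ∧ Nat.Prime (a * p + 1))).card : ℝ)
        ≤ C * X / (Real.log X) ^ 2)
    (hPNT : ∃ c : ℝ, 0 < c ∧ ∃ X0 : ℕ, ∀ X : ℕ, X0 ≤ X →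
      c * X / Real.log X ≤ (((Finset.range (X + 1)).filter Nat.Prime).card : ℝ)) :
    {p : ℕ | Nat.Prime p ∧ ¬ Nat.Prime (2 * p + 1) ∧ ¬ Nat.Prime (4 * p + 1) ∧
      ¬ Nat.Prime (6 * p + 1)}.Infinite := by
  simpa using Nat.infinite_setOf_prime_forall_not_prime_mul_add_one {2, 4, 6} hbound hPNT
end
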